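/- arXiv:2303.05899 — 2 statements merged into one kernel-verified Lean document; each statement's English description precedes it below -/
import Mathlib

section
/- If M is a point in the plane of a square ABCD with integer side length such that the distances from M to all four vertices are positive integers, then no line through a vertex of the square and through M makes an angle with a side of the square that is a rational multiple of π, unless that angle is 0, π/2 or π (which cases are themselves impossible). Concretely: the angle ∠MDA cannot equal π/3 or 2π/3. -/
/-!
Put A at the origin and D = (a, 0). The height of M above the line AD is MD · sin ∠MDA, so for
∠MDA ∈ {π/3, 2π/3} its square is (3/4)·MD². On the other hand, twice a times that height is
MA² − MB² + a², an integer. Squaring gives (MA² − MB² + a²)² = 3 (a · MD)², impossible in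
nonzero integers since √3 is irrational.
-/

open EuclideanGeometry

theorem sq_ne_three_mul_sq {c k : ℤ} (hk : k ≠ 0) : c ^ 2 ≠ 3 * k ^ 2 := by
  intro h
  have hsq : IsSquare (3 : ℚ) := ⟨c / k, by field_simp; exact_mod_cast h.symm⟩
  rw [Rat.isSquare_iff] at hsq
  exact absurd hsq.1 (by norm_num)

theorem EuclideanSpace.dist_sq_fin_two (M P : EuclideanSpace ℝ (Fin 2)) :
    dist M P ^ 2 = (M 0 - P 0) ^ 2 + (M 1 - P 1) ^ 2 := by
  rw [EuclideanSpace.dist_eq, Real.sq_sqrt (by positivity)]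
  simp [Fin.sum_univ_two, Real.dist_eq, sq_abs]

theorem sq_apply_one_eq_dist_sq_mul_sin_angle_sq {M P Q : EuclideanSpace ℝ (Fin 2)}
    (hP : P 1 = 0) (hQ : Q 1 = 0) (hPQ : P ≠ Q) :
    M 1 ^ 2 = dist M P ^ 2 * Real.sin (∠ M P Q) ^ 2 := by
  have hQP : dist Q P ≠ 0 := dist_ne_zero.2 hPQ.symm
  have hcos : dist M P * Real.cos (∠ M P Q) * dist Q P = (M 0 - P 0) * (Q 0 - P 0) := by
    have := law_cos M P Q
    simp only [← sq, EuclideanSpace.dist_sq_fin_two, hP, hQ] at this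
    linear_combination this / 2
  have hQP2 := EuclideanSpace.dist_sq_fin_two Q P
  have hMP := EuclideanSpace.dist_sq_fin_two M P
  rw [hP, hQ] at hQP2
  rw [hP] at hMP
  have hproj : (dist M P * Real.cos (∠ M P Q)) ^ 2 = (M 0 - P 0) ^ 2 := by
    apply mul_right_cancel₀ (pow_ne_zero 2 hQP)
    linear_combination
      (dist M P * Real.cos (∠ M P Q) * dist Q P + (M 0 - P 0) * (Q 0 - P 0)) * hcos
        - (M 0 - P 0) ^ 2 * hQP2
  rw [Real.sin_sq]
  linear_combination hproj - hMP

theorem sin_angle_sq_ne_three_div_four {a n p m : ℕ} (ha : 0 < a) (hm : 0 < m)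
    {M A B D : EuclideanSpace ℝ (Fin 2)}
    (hA : A = !₂[0, 0]) (hB : B = !₂[0, (a : ℝ)]) (hD : D = !₂[(a : ℝ), 0])
    (hMA : dist M A = n) (hMB : dist M B = p) (hMD : dist M D = m) :
    Real.sin (∠ M D A) ^ 2 ≠ 3 / 4 := by
  subst hA hB hD
  intro hsin
  have hDA : (!₂[(a : ℝ), 0] : EuclideanSpace ℝ (Fin 2)) ≠ !₂[0, 0] := fun h => by
    simpa [ha.ne'] using congrArg (· 0) h
  have hy : M 1 ^ 2 = 3 / 4 * (m : ℝ) ^ 2 := by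
    rw [sq_apply_one_eq_dist_sq_mul_sin_angle_sq (by simp) (by simp) hDA, hsin, hMD]
    ring
  have h2ay : 2 * a * M 1 = (n : ℝ) ^ 2 - p ^ 2 + a ^ 2 := by
    have hA2 := EuclideanSpace.dist_sq_fin_two M !₂[0, 0]
    have hB2 := EuclideanSpace.dist_sq_fin_two M !₂[0, (a : ℝ)]
    simp only [hMA, hMB, Matrix.cons_val_zero, Matrix.cons_val_one, Matrix.cons_val_fin_one,
      sub_zero] at hA2 hB2
    linear_combination hB2 - hA2
  refine sq_ne_three_mul_sq (c := n ^ 2 - p ^ 2 + a ^ 2) (k := a * m) (by positivity) ?_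
  have hR : ((n : ℝ) ^ 2 - p ^ 2 + a ^ 2) ^ 2 = 3 * (a * m) ^ 2 := by
    rw [← h2ay]
    linear_combination 4 * (a : ℝ) ^ 2 * hy
  exact_mod_cast hR

theorem steinhaus_square_vertex_angle_general
    (a : ℕ) (ha : 0 < a) (M : EuclideanSpace ℝ (Fin 2))
    (A B D : EuclideanSpace ℝ (Fin 2))
    (hA : A = !₂[0, 0]) (hB : B = !₂[0, (a : ℝ)])
    (hD : D = !₂[(a : ℝ), 0])
    (hMA : ∃ n : ℕ, 0 < n ∧ dist M A = n)
    (hMB : ∃ n : ℕ, 0 < n ∧ dist M B = n)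
    (hMD : ∃ n : ℕ, 0 < n ∧ dist M D = n) :
    ∠ M D A ≠ Real.pi / 3 ∧ ∠ M D A ≠ 2 * Real.pi / 3 := by
  obtain ⟨n, -, hn⟩ := hMA
  obtain ⟨p, -, hp⟩ := hMB
  obtain ⟨m, hm, hm'⟩ := hMD
  have hsin := sin_angle_sq_ne_three_div_four ha hm hA hB hD hn hp hm'
  refine ⟨fun h => hsin ?_, fun h => hsin ?_⟩
  · rw [h, Real.sq_sin_pi_div_three]
  · rw [h, show 2 * Real.pi / 3 = Real.pi - Real.pi / 3 by ring, Real.sin_pi_sub,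
      Real.sq_sin_pi_div_three]

theorem steinhaus_square_vertex_angle
    (a : ℕ) (ha : 0 < a) (M : EuclideanSpace ℝ (Fin 2))
    (A B C D : EuclideanSpace ℝ (Fin 2))
    (hA : A = !₂[0, 0]) (hB : B = !₂[0, (a : ℝ)])
    (hC : C = !₂[(a : ℝ), (a : ℝ)]) (hD : D = !₂[(a : ℝ), 0])
    (hMA : ∃ n : ℕ, 0 < n ∧ dist M A = n)
    (hMB : ∃ n : ℕ, 0 < n ∧ dist M B = n)
    (hMC : ∃ n : ℕ, 0 < n ∧ dist M C = n)
    (hMD : ∃ n : ℕ, 0 < n ∧ dist M D = n) :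
    ∠ M D A ≠ Real.pi / 3 ∧ ∠ M D A ≠ 2 * Real.pi / 3 :=
  steinhaus_square_vertex_angle_general a ha M A B D hA hB hD hMA hMB hMD
end

section
/- Let ABC be an equilateral triangle with side length a, and M a point in its plane with |MA| = p, |MB| = k, |MC| = q. Then a⁴ + p⁴ + k⁴ + q⁴ − a²p² − a²k² − a²q² − p²k² − p²q² − k²q² = 0. -/
lemma dist_sq_coords (x y : EuclideanSpace ℝ (Fin 2)) :
    dist x y ^ 2 = (x 0 - y 0) ^ 2 + (x 1 - y 1) ^ 2 := by
  rw [EuclideanSpace.dist_eq, Real.sq_sqrt (Finset.sum_nonneg fun i _ => sq_nonneg _)]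
  simp [Fin.sum_univ_two, Real.dist_eq, sq_abs]

theorem equilateral_point_identity (A B C M : EuclideanSpace ℝ (Fin 2)) (a p q k : ℝ)
    (ha : 0 < a) (hAB : dist A B = a) (hBC : dist B C = a) (hCA : dist C A = a)
    (hp : dist M A = p) (hq : dist M C = q) (hk : dist M B = k) :
    a ^ 4 + p ^ 4 + k ^ 4 + q ^ 4 - a ^ 2 * p ^ 2 - a ^ 2 * k ^ 2 - a ^ 2 * q ^ 2 -
      p ^ 2 * k ^ 2 - p ^ 2 * q ^ 2 - k ^ 2 * q ^ 2 = 0 := by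
  have h1 : (A 0 - B 0) ^ 2 + (A 1 - B 1) ^ 2 = a ^ 2 := by rw [← dist_sq_coords, hAB]
  have h2 : (B 0 - C 0) ^ 2 + (B 1 - C 1) ^ 2 = a ^ 2 := by rw [← dist_sq_coords, hBC]
  have h3 : (C 0 - A 0) ^ 2 + (C 1 - A 1) ^ 2 = a ^ 2 := by rw [← dist_sq_coords, hCA]
  have h4 : (M 0 - A 0) ^ 2 + (M 1 - A 1) ^ 2 = p ^ 2 := by rw [← dist_sq_coords, hp]
  have h5 : (M 0 - C 0) ^ 2 + (M 1 - C 1) ^ 2 = q ^ 2 := by rw [← dist_sq_coords, hq]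
  have h6 : (M 0 - B 0) ^ 2 + (M 1 - B 1) ^ 2 = k ^ 2 := by rw [← dist_sq_coords, hk]
  -- abbreviations for coordinates
  set m0 := M 0; set m1 := M 1; set a0 := A 0; set a1 := A 1
  set b0 := B 0; set b1 := B 1; set c0 := C 0; set c1 := C 1
  -- inner products with u = B - A, v = C - A, w = M - A
  set s : ℝ := (m0 - a0) * (b0 - a0) + (m1 - a1) * (b1 - a1) with hsdef
  set t : ℝ := (m0 - a0) * (c0 - a0) + (m1 - a1) * (c1 - a1) with htdef
  set G : ℝ := (b0 - a0) * (c0 - a0) + (b1 - a1) * (c1 - a1) with hGdef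
  set U : ℝ := (a0 - b0) ^ 2 + (a1 - b1) ^ 2 with hUdef
  set V : ℝ := (c0 - a0) ^ 2 + (c1 - a1) ^ 2 with hVdef
  set P : ℝ := (m0 - a0) ^ 2 + (m1 - a1) ^ 2 with hPdef
  have hs : 2 * s = p ^ 2 + a ^ 2 - k ^ 2 := by linear_combination h4 + h1 - h6
  have ht : 2 * t = p ^ 2 + a ^ 2 - q ^ 2 := by linear_combination h4 + h3 - h5
  have hg : G = a ^ 2 / 2 := by linear_combination (h1 + h3 - h2) / 2
  -- Gram determinant of three vectors in the plane vanishes identically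
  have hdet : U * (V * P - t ^ 2) - G * (G * P - s * t) + s * (G * t - V * s) = 0 := by
    simp only [hsdef, htdef, hGdef, hUdef, hVdef, hPdef]; ring
  have key : a ^ 2 * (s ^ 2 - s * t + t ^ 2) = 3 / 4 * a ^ 4 * p ^ 2 := by
    linear_combination (-1) * hdet + (V * P - t ^ 2) * h1 + (a ^ 2 * P - s ^ 2) * h3 +
      (2 * s * t - P * (G + a ^ 2 / 2)) * hg + (3 / 4 * a ^ 4) * h4
  have key2 : s ^ 2 - s * t + t ^ 2 = 3 / 4 * a ^ 2 * p ^ 2 :=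
    mul_left_cancel₀ (pow_ne_zero 2 ha.ne') (by linear_combination key)
  have hs' : s = (p ^ 2 + a ^ 2 - k ^ 2) / 2 := by linarith
  have ht' : t = (p ^ 2 + a ^ 2 - q ^ 2) / 2 := by linarith
  rw [hs', ht'] at key2
  linear_combination 4 * key2
end
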